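/- Let ρ_AB be a density matrix on a finite-dimensional tensor product H_A ⊗ H_B with marginals ρ_A = Tr_B[ρ_AB] and ρ_B = Tr_A[ρ_AB]. Then S_vN(ρ_AB) ≤ S_vN(ρ_A) + S_vN(ρ_B) (subadditivity of von Neumann entropy). -/

import Mathlib

open Matrix BigOperators Kronecker
open scoped ComplexOrder

/-- Spectral functional calculus for Hermitian matrices (junk value `0` otherwise). -/
noncomputable def matFun {n : Type*} [Fintype n] [DecidableEq n] (f : ℝ → ℝ) (A : Matrix n n ℂ) :
    Matrix n n ℂ :=
  if hA : A.IsHermitian then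
    (hA.eigenvectorUnitary : Matrix n n ℂ) *
      Matrix.diagonal (fun i => (f (hA.eigenvalues i) : ℂ)) *
      star (hA.eigenvectorUnitary : Matrix n n ℂ)
  else 0

/-- Matrix logarithm. -/
noncomputable def matLog {n : Type*} [Fintype n] [DecidableEq n] (A : Matrix n n ℂ) : Matrix n n ℂ :=
  matFun Real.log A

/-- Von Neumann entropy `S(ρ) = −Tr[ρ log ρ]`. -/
noncomputable def vN {n : Type*} [Fintype n] [DecidableEq n] (ρ : Matrix n n ℂ) : ℝ :=
  -(Matrix.trace (ρ * matLog ρ)).re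

/-- Canonical Gibbs state `e^{−βH}/Tr[e^{−βH}]`. -/
noncomputable def gibbs {n : Type*} [Fintype n] [DecidableEq n] (β : ℝ) (H : Matrix n n ℂ) :
    Matrix n n ℂ :=
  ((matFun (fun x => Real.exp (-β * x)) H).trace)⁻¹ • matFun (fun x => Real.exp (-β * x)) H

/-- Partial trace over the second factor. -/
noncomputable def ptraceB {m d : ℕ} (ρ : Matrix (Fin m × Fin d) (Fin m × Fin d) ℂ) :
    Matrix (Fin m) (Fin m) ℂ :=
  Matrix.of fun i j => ∑ k, ρ (i, k) (j, k)

/-- Partial trace over the first factor. -/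
noncomputable def ptraceA' {m d : ℕ} (ρ : Matrix (Fin m × Fin d) (Fin m × Fin d) ℂ) :
    Matrix (Fin d) (Fin d) ℂ :=
  Matrix.of fun i j => ∑ k, ρ (k, i) (k, j)

/-! ### Auxiliary lemmas -/

lemma sum_swap13 {M : Type*} [AddCommMonoid M] {α β γ : Type*} [Fintype α] [Fintype β] [Fintype γ]
    (f : α → β → γ → M) : (∑ a, ∑ b, ∑ c, f a b c) = ∑ c, ∑ b, ∑ a, f a b c := by
  rw [Finset.sum_comm]
  rw [Finset.sum_congr rfl fun b _ => Finset.sum_comm]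
  rw [Finset.sum_comm]

section aux
variable {n : Type*} [Fintype n] [DecidableEq n]

lemma matFun_eq (f : ℝ → ℝ) {A : Matrix n n ℂ} (hA : A.IsHermitian) :
    matFun f A = (hA.eigenvectorUnitary : Matrix n n ℂ) *
      Matrix.diagonal (fun i => (f (hA.eigenvalues i) : ℂ)) *
      star (hA.eigenvectorUnitary : Matrix n n ℂ) := by
  rw [matFun, dif_pos hA]

lemma trace_U_D_U (U : Matrix.unitaryGroup n ℂ) (D : Matrix n n ℂ) :
    Matrix.trace ((U : Matrix n n ℂ) * D * star (U : Matrix n n ℂ)) = Matrix.trace D := by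
  rw [Matrix.trace_mul_cycle, Matrix.UnitaryGroup.star_mul_self, one_mul]

lemma trace_eq_sum_eigen {A : Matrix n n ℂ} (hA : A.IsHermitian) :
    Matrix.trace A = ∑ i, (hA.eigenvalues i : ℂ) := by
  conv_lhs => rw [hA.spectral_theorem]
  rw [Unitary.conjStarAlgAut_apply, trace_U_D_U, Matrix.trace_diagonal]
  rfl

lemma UDU_mul_UDU (U : Matrix.unitaryGroup n ℂ) (D L : Matrix n n ℂ) :
    ((U : Matrix n n ℂ) * D * star (U : Matrix n n ℂ)) *
      ((U : Matrix n n ℂ) * L * star (U : Matrix n n ℂ)) =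
    (U : Matrix n n ℂ) * (D * L) * star (U : Matrix n n ℂ) := by
  have hU : star (U : Matrix n n ℂ) * (U : Matrix n n ℂ) = 1 :=
    Matrix.UnitaryGroup.star_mul_self _
  rw [mul_assoc, mul_assoc, mul_assoc, ← mul_assoc (star (U : Matrix n n ℂ)), hU, one_mul,
    mul_assoc, ← mul_assoc D, ← mul_assoc, ← mul_assoc]

lemma trace_mul_matLog_re {A : Matrix n n ℂ} (hA : A.IsHermitian) :
    (Matrix.trace (A * matLog A)).re = ∑ i, hA.eigenvalues i * Real.log (hA.eigenvalues i) := by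
  have h1 : A * matLog A = (hA.eigenvectorUnitary : Matrix n n ℂ) *
      Matrix.diagonal (fun i => ((hA.eigenvalues i * Real.log (hA.eigenvalues i) : ℝ) : ℂ)) *
      star (hA.eigenvectorUnitary : Matrix n n ℂ) := by
    rw [matLog, matFun_eq Real.log hA]
    nth_rewrite 1 [hA.spectral_theorem]
    rw [Unitary.conjStarAlgAut_apply, UDU_mul_UDU, Matrix.diagonal_mul_diagonal]
    congr 2
    ext i
    push_cast
    rfl
  rw [h1, trace_U_D_U, Matrix.trace_diagonal, Complex.re_sum]
  simp
end aux

/-! ### Klein's inequality, scalar core -/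

lemma klein {ι κ : Type*} [Fintype ι] [Fintype κ] (p : ι → ℝ) (q μ : κ → ℝ) (w : ι → κ → ℝ)
    (hp : ∀ i, 0 ≤ p i) (hq : ∀ j, 0 ≤ q j) (hw : ∀ i j, 0 ≤ w i j)
    (hrow : ∀ i, ∑ j, w i j = 1) (hcol : ∀ j, ∑ i, w i j = 1)
    (hp1 : ∑ i, p i = 1) (hq1 : ∑ j, q j = 1)
    (hμ : ∀ j, 0 < q j → μ j = Real.log (q j))
    (hker : ∀ i j, q j = 0 → w i j * p i = 0) :
    ∑ i, ∑ j, w i j * (p i * μ j) ≤ ∑ i, p i * Real.log (p i) := by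
  have hL : ∑ i, p i * Real.log (p i) = ∑ i, ∑ j, w i j * (p i * Real.log (p i)) := by
    refine Finset.sum_congr rfl fun i _ => ?_
    rw [← Finset.sum_mul, hrow i, one_mul]
  rw [hL]
  have key : ∀ i j, w i j * (p i - q j) ≤ w i j * (p i * Real.log (p i)) - w i j * (p i * μ j) := by
    intro i j
    rcases eq_or_lt_of_le (hq j) with h0 | hqj
    · have h1 := hker i j h0.symm
      have h2 : w i j * q j = 0 := by rw [← h0, mul_zero]
      have h3 : w i j * (p i * Real.log (p i)) = 0 := by
        rw [← mul_assoc, h1, zero_mul]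
      have h4 : w i j * (p i * μ j) = 0 := by
        rw [mul_comm (p i) (μ j), ← mul_assoc, mul_comm (w i j) (μ j), mul_assoc, h1, mul_zero]
      rw [h3, h4, mul_sub, h2, sub_zero, h1]
      simp
    · rw [hμ j hqj]
      rcases eq_or_lt_of_le (hp i) with hp0 | hpi
      · rw [← hp0]
        have : w i j * (0 - q j) ≤ 0 := mul_nonpos_of_nonneg_of_nonpos (hw i j) (by linarith)
        simpa using this
      · have hlog : Real.log (q j) - Real.log (p i) ≤ q j / p i - 1 := by
          rw [← Real.log_div (ne_of_gt hqj) (ne_of_gt hpi)]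
          exact Real.log_le_sub_one_of_pos (div_pos hqj hpi)
        have h5 : p i - q j ≤ p i * Real.log (p i) - p i * Real.log (q j) := by
          have := mul_le_mul_of_nonneg_left hlog (le_of_lt hpi)
          rw [mul_sub, mul_sub, mul_div_cancel₀ _ (ne_of_gt hpi), mul_one] at this
          linarith
        have := mul_le_mul_of_nonneg_left h5 (hw i j)
        rw [mul_sub] at this ⊢
        linarith
  have hsum : ∑ i, ∑ j, w i j * (p i - q j) = 0 := by
    have : ∑ i, ∑ j, w i j * (p i - q j)
        = (∑ i, ∑ j, w i j * p i) - ∑ i, ∑ j, w i j * q j := by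
      simp [mul_sub, Finset.sum_sub_distrib]
    rw [this]
    have e1 : ∑ i, ∑ j, w i j * p i = 1 := by
      calc ∑ i, ∑ j, w i j * p i = ∑ i, (∑ j, w i j) * p i := by
            simp [Finset.sum_mul]
        _ = 1 := by simp only [hrow, one_mul, hp1]
    have e2 : ∑ i, ∑ j, w i j * q j = 1 := by
      rw [Finset.sum_comm]
      calc ∑ j, ∑ i, w i j * q j = ∑ j, (∑ i, w i j) * q j := by
            simp [Finset.sum_mul]
        _ = 1 := by simp only [hcol, one_mul, hq1]
    rw [e1, e2, sub_self]
  have hfin : ∑ i, ∑ j, w i j * (p i - q j)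
      ≤ ∑ i, ∑ j, (w i j * (p i * Real.log (p i)) - w i j * (p i * μ j)) :=
    Finset.sum_le_sum fun i _ => Finset.sum_le_sum fun j _ => key i j
  rw [hsum] at hfin
  simp only [Finset.sum_sub_distrib] at hfin
  linarith

/-! ### Partial trace lemmas -/

section pt
variable {m d : ℕ} (ρ : Matrix (Fin m × Fin d) (Fin m × Fin d) ℂ)

def embB (v : Fin m → ℂ) (k : Fin d) : (Fin m × Fin d) → ℂ := fun x => if x.2 = k then v x.1 else 0
def embA (v : Fin d → ℂ) (k : Fin m) : (Fin m × Fin d) → ℂ := fun x => if x.1 = k then v x.2 else 0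

lemma dot_ptraceB (v : Fin m → ℂ) :
    star v ⬝ᵥ (ptraceB ρ *ᵥ v) = ∑ k, star (embB v k) ⬝ᵥ (ρ *ᵥ embB v k) := by
  simp only [dotProduct, mulVec, ptraceB, embB, Matrix.of_apply, Pi.star_apply,
    Fintype.sum_prod_type, apply_ite (star : ℂ → ℂ), star_zero, ite_mul, mul_ite,
    zero_mul, mul_zero, Finset.sum_ite_eq, Finset.sum_ite_eq', Finset.mem_univ, if_true,
    Finset.mul_sum, Finset.sum_mul]
  rw [Finset.sum_comm]
  have inner : ∀ (k : Fin d) (x1 : Fin m),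
      (∑ x2 : Fin d, ∑ x3 : Fin m,
        if x2 = k then star (v x1) * (ρ (x1, x2) (x3, k) * v x3) else 0)
      = ∑ x3, star (v x1) * (ρ (x1, k) (x3, k) * v x3) := by
    intro k x1
    rw [Finset.sum_comm]
    simp
  rw [Finset.sum_congr rfl fun k _ => Finset.sum_congr rfl fun x1 _ => inner k x1]
  exact sum_swap13 _

lemma dot_ptraceA' (v : Fin d → ℂ) :
    star v ⬝ᵥ (ptraceA' ρ *ᵥ v) = ∑ k, star (embA v k) ⬝ᵥ (ρ *ᵥ embA v k) := by
  simp only [dotProduct, mulVec, ptraceA', embA, Matrix.of_apply, Pi.star_apply,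
    Fintype.sum_prod_type, apply_ite (star : ℂ → ℂ), star_zero, ite_mul, mul_ite,
    zero_mul, mul_zero, Finset.sum_ite_eq, Finset.sum_ite_eq', Finset.mem_univ, if_true,
    Finset.mul_sum, Finset.sum_mul]
  have inner : ∀ (k : Fin m) (x1 : Fin m),
      (∑ x2 : Fin d, ∑ x3 : Fin m, ∑ x4 : Fin d,
        if x3 = k then if x1 = k then star (v x2) * (ρ (x1, x2) (x3, x4) * v x4) else 0 else 0)
      = if x1 = k then ∑ x2, ∑ x4, star (v x2) * (ρ (k, x2) (k, x4) * v x4) else 0 := by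
    intro k x1
    by_cases h : x1 = k
    · subst h
      simp only [if_true]
      refine Finset.sum_congr rfl fun x2 _ => ?_
      rw [Finset.sum_comm]
      simp
    · simp [h]
  rw [Finset.sum_congr rfl fun k _ => Finset.sum_congr rfl fun x1 _ => inner k x1]
  simp only [Finset.sum_ite_eq', Finset.mem_univ, if_true]
  rw [Finset.sum_congr rfl fun x _ => Finset.sum_comm]
  rw [Finset.sum_comm]

lemma ptraceB_isHermitian (hρ : ρ.IsHermitian) : (ptraceB ρ).IsHermitian := by
  ext i j
  simp only [Matrix.conjTranspose_apply, ptraceB, Matrix.of_apply, star_sum]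
  exact Finset.sum_congr rfl fun k _ => hρ.apply _ _

lemma ptraceA'_isHermitian (hρ : ρ.IsHermitian) : (ptraceA' ρ).IsHermitian := by
  ext i j
  simp only [Matrix.conjTranspose_apply, ptraceA', Matrix.of_apply, star_sum]
  exact Finset.sum_congr rfl fun k _ => hρ.apply _ _

lemma ptraceB_posSemidef (hρ : ρ.PosSemidef) : (ptraceB ρ).PosSemidef := by
  refine Matrix.PosSemidef.of_dotProduct_mulVec_nonneg (ptraceB_isHermitian ρ hρ.1) fun v => ?_
  rw [dot_ptraceB]
  exact Finset.sum_nonneg fun k _ => hρ.dotProduct_mulVec_nonneg _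

lemma ptraceA'_posSemidef (hρ : ρ.PosSemidef) : (ptraceA' ρ).PosSemidef := by
  refine Matrix.PosSemidef.of_dotProduct_mulVec_nonneg (ptraceA'_isHermitian ρ hρ.1) fun v => ?_
  rw [dot_ptraceA']
  exact Finset.sum_nonneg fun k _ => hρ.dotProduct_mulVec_nonneg _

lemma ptraceB_trace : (ptraceB ρ).trace = ρ.trace := by
  simp [Matrix.trace, ptraceB, Matrix.diag, Fintype.sum_prod_type]

lemma ptraceA'_trace : (ptraceA' ρ).trace = ρ.trace := by
  rw [Matrix.trace, Matrix.trace, Fintype.sum_prod_type, Finset.sum_comm]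
  simp [ptraceA', Matrix.diag]

lemma ker_ptraceB (hρ : ρ.PosSemidef) (v : Fin m → ℂ) (hv : ptraceB ρ *ᵥ v = 0)
    (w : Fin d → ℂ) : ρ *ᵥ (fun x => v x.1 * w x.2) = 0 := by
  have h0 : ∑ k, star (embB v k) ⬝ᵥ (ρ *ᵥ embB v k) = 0 := by
    rw [← dot_ptraceB, hv, dotProduct_zero]
  have hterm : ∀ k ∈ Finset.univ, star (embB v k) ⬝ᵥ (ρ *ᵥ embB v k) = 0 :=
    (Finset.sum_eq_zero_iff_of_nonneg (fun k _ => hρ.dotProduct_mulVec_nonneg _)).mp h0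
  have hker : ∀ k, ρ *ᵥ embB v k = 0 := fun k =>
    (hρ.dotProduct_mulVec_zero_iff _).mp (hterm k (Finset.mem_univ k))
  have hdecomp : (fun x : Fin m × Fin d => v x.1 * w x.2) = ∑ k, w k • embB v k := by
    funext x
    simp [embB, Finset.sum_ite_eq', mul_comm]
  rw [hdecomp, ← Matrix.mulVecLin_apply, map_sum]
  refine Finset.sum_eq_zero fun k _ => ?_
  rw [LinearMap.map_smul, Matrix.mulVecLin_apply, hker k, smul_zero]

lemma ker_ptraceA' (hρ : ρ.PosSemidef) (v : Fin d → ℂ) (hv : ptraceA' ρ *ᵥ v = 0)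
    (w : Fin m → ℂ) : ρ *ᵥ (fun x => w x.1 * v x.2) = 0 := by
  have h0 : ∑ k, star (embA v k) ⬝ᵥ (ρ *ᵥ embA v k) = 0 := by
    rw [← dot_ptraceA', hv, dotProduct_zero]
  have hterm : ∀ k ∈ Finset.univ, star (embA v k) ⬝ᵥ (ρ *ᵥ embA v k) = 0 :=
    (Finset.sum_eq_zero_iff_of_nonneg (fun k _ => hρ.dotProduct_mulVec_nonneg _)).mp h0
  have hker : ∀ k, ρ *ᵥ embA v k = 0 := fun k =>
    (hρ.dotProduct_mulVec_zero_iff _).mp (hterm k (Finset.mem_univ k))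
  have hdecomp : (fun x : Fin m × Fin d => w x.1 * v x.2) = ∑ k, w k • embA v k := by
    funext x
    simp [embA, Finset.sum_ite_eq', mul_comm]
  rw [hdecomp, ← Matrix.mulVecLin_apply, map_sum]
  refine Finset.sum_eq_zero fun k _ => ?_
  rw [LinearMap.map_smul, Matrix.mulVecLin_apply, hker k, smul_zero]

lemma trace_mul_kron_left (X : Matrix (Fin m) (Fin m) ℂ) :
    (ρ * (X ⊗ₖ (1 : Matrix (Fin d) (Fin d) ℂ))).trace = (ptraceB ρ * X).trace := by
  simp only [Matrix.trace, Matrix.diag, Matrix.mul_apply, Matrix.kroneckerMap_apply,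
    ptraceB, Matrix.of_apply, Fintype.sum_prod_type, Matrix.one_apply, mul_ite, mul_one,
    mul_zero, Finset.sum_ite_eq, Finset.sum_ite_eq', Finset.mem_univ, if_true,
    Finset.sum_mul, Finset.mul_sum]
  exact Finset.sum_congr rfl fun x _ => Finset.sum_comm

lemma trace_mul_kron_right (Y : Matrix (Fin d) (Fin d) ℂ) :
    (ρ * ((1 : Matrix (Fin m) (Fin m) ℂ) ⊗ₖ Y)).trace = (ptraceA' ρ * Y).trace := by
  simp only [Matrix.trace, Matrix.diag, Matrix.mul_apply, Matrix.kroneckerMap_apply,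
    ptraceA', Matrix.of_apply, Fintype.sum_prod_type, Matrix.one_apply, ite_mul, one_mul,
    zero_mul, mul_ite, mul_zero, Finset.sum_ite_eq, Finset.sum_ite_eq', Finset.mem_univ, if_true,
    Finset.sum_mul, Finset.mul_sum]
  have inner : ∀ (x : Fin m) (x1 : Fin d),
      (∑ x2 : Fin m, ∑ x3 : Fin d, if x2 = x then ρ (x, x1) (x2, x3) * Y x3 x1 else 0)
      = ∑ x3, ρ (x, x1) (x, x3) * Y x3 x1 := by
    intro x x1
    rw [Finset.sum_comm]
    simp
  rw [Finset.sum_congr rfl fun x _ => Finset.sum_congr rfl fun x1 _ => inner x x1]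
  rw [Finset.sum_comm]
  exact Finset.sum_congr rfl fun x1 _ => Finset.sum_comm

end pt

/-! ### Kronecker lemmas -/

lemma star_kron {m d : ℕ} (A : Matrix (Fin m) (Fin m) ℂ) (B : Matrix (Fin d) (Fin d) ℂ) :
    star (A ⊗ₖ B) = star A ⊗ₖ star B := by
  ext x y
  simp [Matrix.conjTranspose_apply, mul_comm]

lemma kron_mem_unitary {m d : ℕ} (V : Matrix.unitaryGroup (Fin m) ℂ)
    (W : Matrix.unitaryGroup (Fin d) ℂ) :
    ((V : Matrix (Fin m) (Fin m) ℂ) ⊗ₖ (W : Matrix (Fin d) (Fin d) ℂ)) ∈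
      Matrix.unitaryGroup (Fin m × Fin d) ℂ := by
  rw [Matrix.mem_unitaryGroup_iff]
  rw [star_kron, ← Matrix.mul_kronecker_mul]
  rw [show (V : Matrix (Fin m) (Fin m) ℂ) * star (V : Matrix (Fin m) (Fin m) ℂ) = 1 from
    Matrix.mem_unitaryGroup_iff.mp V.2]
  rw [show (W : Matrix (Fin d) (Fin d) ℂ) * star (W : Matrix (Fin d) (Fin d) ℂ) = 1 from
    Matrix.mem_unitaryGroup_iff.mp W.2]
  exact Matrix.one_kronecker_one

/-! ### Main theorem -/

/-- Subadditivity of the von Neumann entropy: `S(ρ_AB) ≤ S(ρ_A) + S(ρ_B)`. -/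
theorem stmt16 {m d : ℕ} (ρ : Matrix (Fin m × Fin d) (Fin m × Fin d) ℂ)
    (hρ : ρ.PosSemidef) (hρ1 : ρ.trace = 1) :
    vN ρ ≤ vN (ptraceB ρ) + vN (ptraceA' ρ) := by
  classical
  have hH : ρ.IsHermitian := hρ.1
  have hPA := ptraceB_posSemidef ρ hρ
  have hPB := ptraceA'_posSemidef ρ hρ
  have hHA : (ptraceB ρ).IsHermitian := hPA.1
  have hHB : (ptraceA' ρ).IsHermitian := hPB.1
  set p : (Fin m × Fin d) → ℝ := hH.eigenvalues with hp_def
  set α : Fin m → ℝ := hHA.eigenvalues with hα_def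
  set β : Fin d → ℝ := hHB.eigenvalues with hβ_def
  set U : Matrix (Fin m × Fin d) (Fin m × Fin d) ℂ := (hH.eigenvectorUnitary : Matrix (Fin m × Fin d) (Fin m × Fin d) ℂ) with hU_def
  set V : Matrix (Fin m) (Fin m) ℂ := (hHA.eigenvectorUnitary : Matrix (Fin m) (Fin m) ℂ) with hV_def
  set W : Matrix (Fin d) (Fin d) ℂ := (hHB.eigenvectorUnitary : Matrix (Fin d) (Fin d) ℂ) with hW_def
  set M : Matrix (Fin m × Fin d) (Fin m × Fin d) ℂ := star U * (V ⊗ₖ W) with hM_def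
  set w : (Fin m × Fin d) → (Fin m × Fin d) → ℝ := fun i j => Complex.normSq (M i j) with hw_def
  set q : (Fin m × Fin d) → ℝ := fun j => α j.1 * β j.2 with hq_def
  set μ : (Fin m × Fin d) → ℝ := fun j => Real.log (α j.1) + Real.log (β j.2) with hμ_def
  -- unitarity of M
  have hVW_mem : (V ⊗ₖ W) ∈ Matrix.unitaryGroup (Fin m × Fin d) ℂ :=
    kron_mem_unitary hHA.eigenvectorUnitary hHB.eigenvectorUnitary
  have hVWs : (V ⊗ₖ W) * star (V ⊗ₖ W) = 1 := Matrix.mem_unitaryGroup_iff.mp hVW_mem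
  have hVWs' : star (V ⊗ₖ W) * (V ⊗ₖ W) = 1 := Matrix.mem_unitaryGroup_iff'.mp hVW_mem
  have hUU : U * star U = 1 := Matrix.mem_unitaryGroup_iff.mp (hH.eigenvectorUnitary).2
  have hUU' : star U * U = 1 := Matrix.mem_unitaryGroup_iff'.mp (hH.eigenvectorUnitary).2
  have hstarM : star M = star (V ⊗ₖ W) * U := by
    rw [hM_def, Matrix.star_mul, star_star]
  have hMM : M * star M = 1 := by
    rw [hM_def, hstarM, mul_assoc, ← mul_assoc (V ⊗ₖ W), hVWs, one_mul, hUU']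
  have hMM' : star M * M = 1 := by
    rw [hM_def, hstarM, mul_assoc, ← mul_assoc U, hUU, one_mul, hVWs']
  -- row and column sums
  have hrow : ∀ i, ∑ j, w i j = 1 := by
    intro i
    have h2 : (M * star M) i i = (1 : Matrix (Fin m × Fin d) (Fin m × Fin d) ℂ) i i := by
      rw [hMM]
    simp only [Matrix.mul_apply, Matrix.star_apply, Matrix.one_apply_eq] at h2
    have h3 : ∀ j, M i j * star (M i j) = ((Complex.normSq (M i j) : ℝ) : ℂ) := by
      intro j
      rw [Complex.star_def, Complex.mul_conj]
    rw [Finset.sum_congr rfl fun j _ => h3 j] at h2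
    exact_mod_cast h2
  have hcol : ∀ j, ∑ i, w i j = 1 := by
    intro j
    have h2 : (star M * M) j j = (1 : Matrix (Fin m × Fin d) (Fin m × Fin d) ℂ) j j := by
      rw [hMM']
    simp only [Matrix.mul_apply, Matrix.star_apply, Matrix.one_apply_eq] at h2
    have h3 : ∀ i, star (M i j) * M i j = ((Complex.normSq (M i j) : ℝ) : ℂ) := by
      intro i
      rw [Complex.star_def, mul_comm, Complex.mul_conj]
    rw [Finset.sum_congr rfl fun i _ => h3 i] at h2
    exact_mod_cast h2
  -- sums of eigenvalues
  have hp1 : ∑ i, p i = 1 := by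
    have h := trace_eq_sum_eigen hH
    rw [hρ1] at h
    exact_mod_cast h.symm
  have hα1 : ∑ a, α a = 1 := by
    have h := trace_eq_sum_eigen hHA
    rw [ptraceB_trace, hρ1] at h
    exact_mod_cast h.symm
  have hβ1 : ∑ b, β b = 1 := by
    have h := trace_eq_sum_eigen hHB
    rw [ptraceA'_trace, hρ1] at h
    exact_mod_cast h.symm
  have hq1 : ∑ j, q j = 1 := by
    rw [hq_def, Fintype.sum_prod_type, ← Finset.sum_mul_sum, hα1, hβ1, one_mul]
  -- nonnegativity
  have hpnn : ∀ i, 0 ≤ p i := hρ.eigenvalues_nonneg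
  have hαnn : ∀ a, 0 ≤ α a := hPA.eigenvalues_nonneg
  have hβnn : ∀ b, 0 ≤ β b := hPB.eigenvalues_nonneg
  have hμlog : ∀ j, 0 < q j → μ j = Real.log (q j) := by
    intro j hqj
    have ha : α j.1 ≠ 0 := by
      intro h
      rw [hq_def] at hqj
      simp only [h, zero_mul] at hqj
      exact lt_irrefl _ hqj
    have hb : β j.2 ≠ 0 := by
      intro h
      rw [hq_def] at hqj
      simp only [h, mul_zero] at hqj
      exact lt_irrefl _ hqj
    rw [hμ_def, hq_def]
    exact (Real.log_mul ha hb).symm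
  -- kernel condition
  have hker : ∀ i j, q j = 0 → w i j * p i = 0 := by
    intro i j hqj
    -- the j-th column of V ⊗ₖ W is annihilated by ρ
    have hcol0 : ρ *ᵥ (fun x : Fin m × Fin d => V x.1 j.1 * W x.2 j.2) = 0 := by
      rcases mul_eq_zero.mp hqj with hα | hβ
      · have hVcol : (fun x : Fin m => V x j.1) = ⇑(hHA.eigenvectorBasis j.1) := by
          funext x
          rw [hV_def]
          exact Matrix.IsHermitian.eigenvectorUnitary_apply hHA x j.1
        have hv : ptraceB ρ *ᵥ (fun x : Fin m => V x j.1) = 0 := by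
          rw [hVcol, hHA.mulVec_eigenvectorBasis]
          rw [show hHA.eigenvalues j.1 = α j.1 from rfl, hα, zero_smul]
        exact ker_ptraceB ρ hρ _ hv _
      · have hWcol : (fun x : Fin d => W x j.2) = ⇑(hHB.eigenvectorBasis j.2) := by
          funext x
          rw [hW_def]
          exact Matrix.IsHermitian.eigenvectorUnitary_apply hHB x j.2
        have hv : ptraceA' ρ *ᵥ (fun x : Fin d => W x j.2) = 0 := by
          rw [hWcol, hHB.mulVec_eigenvectorBasis]
          rw [show hHB.eigenvalues j.2 = β j.2 from rfl, hβ, zero_smul]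
        exact ker_ptraceA' ρ hρ _ hv _
    -- u is the i-th eigenvector of ρ
    have hu : (fun x => U x i) = ⇑(hH.eigenvectorBasis i) := by
      funext x
      rw [hU_def]
      exact Matrix.IsHermitian.eigenvectorUnitary_apply hH x i
    have hMij : (p i : ℂ) * M i j = 0 := by
      have e0 : M i j = star (fun x => U x i) ⬝ᵥ (fun x : Fin m × Fin d => V x.1 j.1 * W x.2 j.2) := by
        rw [hM_def]
        simp [Matrix.mul_apply, Matrix.star_apply, dotProduct, Matrix.kroneckerMap_apply]
      have e1 : star (fun x => U x i) ᵥ* ρ = (p i : ℝ) • star (fun x => U x i) := by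
        have h := Matrix.star_mulVec (M := ρ) (v := (fun x => U x i))
        rw [show ρᴴ = ρ from hH] at h
        rw [← h, hu, hH.mulVec_eigenvectorBasis, star_smul, star_trivial]
      have e2 : star (fun x => U x i) ⬝ᵥ (ρ *ᵥ (fun x : Fin m × Fin d => V x.1 j.1 * W x.2 j.2)) = 0 := by
        rw [hcol0, dotProduct_zero]
      rw [Matrix.dotProduct_mulVec, e1, smul_dotProduct, ← e0] at e2
      rw [← Complex.real_smul]
      exact e2
    rcases mul_eq_zero.mp hMij with h | h
    · have : p i = 0 := by exact_mod_cast h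
      rw [this, mul_zero]
    · rw [hw_def]
      simp [h]
  -- the joint operator
  set E : Matrix (Fin m × Fin d) (Fin m × Fin d) ℂ := Matrix.diagonal (fun j => (μ j : ℂ)) with hE_def
  set Dp : Matrix (Fin m × Fin d) (Fin m × Fin d) ℂ := Matrix.diagonal (fun i => (p i : ℂ)) with hDp_def
  set Lmat : Matrix (Fin m × Fin d) (Fin m × Fin d) ℂ :=
    matLog (ptraceB ρ) ⊗ₖ (1 : Matrix (Fin d) (Fin d) ℂ) +
    (1 : Matrix (Fin m) (Fin m) ℂ) ⊗ₖ matLog (ptraceA' ρ) with hL_def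
  have hLmat : Lmat = (V ⊗ₖ W) * E * star (V ⊗ₖ W) := by
    have hWW : W * star W = 1 := Matrix.mem_unitaryGroup_iff.mp (hHB.eigenvectorUnitary).2
    have hVV : V * star V = 1 := Matrix.mem_unitaryGroup_iff.mp (hHA.eigenvectorUnitary).2
    have hEsplit : E = Matrix.diagonal (fun a => (Real.log (α a) : ℂ)) ⊗ₖ (1 : Matrix (Fin d) (Fin d) ℂ)
        + (1 : Matrix (Fin m) (Fin m) ℂ) ⊗ₖ Matrix.diagonal (fun b => (Real.log (β b) : ℂ)) := by
      rw [show (1 : Matrix (Fin d) (Fin d) ℂ) = Matrix.diagonal (fun _ => 1) from (Matrix.diagonal_one).symm,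
        show (1 : Matrix (Fin m) (Fin m) ℂ) = Matrix.diagonal (fun _ => 1) from (Matrix.diagonal_one).symm,
        Matrix.diagonal_kronecker_diagonal, Matrix.diagonal_kronecker_diagonal,
        Matrix.diagonal_add]
      rw [hE_def, hμ_def]
      have heq : (fun j : Fin m × Fin d => ((Real.log (α j.1) + Real.log (β j.2) : ℝ) : ℂ))
          = fun j : Fin m × Fin d =>
              (Real.log (α j.1) : ℂ) * 1 + 1 * (Real.log (β j.2) : ℂ) := by
        funext j
        push_cast
        ring
      rw [heq]
    rw [hEsplit, Matrix.mul_add, Matrix.add_mul, hL_def]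
    congr 1
    · rw [star_kron, ← Matrix.mul_kronecker_mul, ← Matrix.mul_kronecker_mul, mul_one, hWW]
      simp only [matLog]
      rw [matFun_eq Real.log hHA]
    · rw [star_kron, ← Matrix.mul_kronecker_mul, ← Matrix.mul_kronecker_mul, mul_one, hVV]
      simp only [matLog]
      rw [matFun_eq Real.log hHB]
  -- trace computation
  have htr : (Matrix.trace (ρ * Lmat)).re = ∑ i, ∑ j, w i j * (p i * μ j) := by
    have e1 : ρ * Lmat = U * (Dp * (star U * ((V ⊗ₖ W) * E * star (V ⊗ₖ W)))) := by
      rw [hLmat]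
      nth_rewrite 1 [hH.spectral_theorem]
      rw [Unitary.conjStarAlgAut_apply, show (hH.eigenvectorUnitary : Matrix (Fin m × Fin d) (Fin m × Fin d) ℂ) = U from rfl]
      rw [show Matrix.diagonal (RCLike.ofReal ∘ hH.eigenvalues) = Dp from rfl]
      simp only [Matrix.mul_assoc]
    have e2 : (Dp * (star U * ((V ⊗ₖ W) * E * star (V ⊗ₖ W)))) * U = Dp * M * E * star M := by
      rw [hstarM, hM_def]
      simp only [Matrix.mul_assoc]
    have e3 : Matrix.trace (ρ * Lmat) = Matrix.trace (Dp * M * E * star M) := by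
      rw [e1, Matrix.trace_mul_comm, e2]
    have e4 : Matrix.trace (Dp * M * E * star M)
        = ∑ i, ∑ j, ((p i * μ j * Complex.normSq (M i j) : ℝ) : ℂ) := by
      rw [Matrix.trace]
      refine Finset.sum_congr rfl fun i _ => ?_
      rw [Matrix.diag_apply, Matrix.mul_apply]
      refine Finset.sum_congr rfl fun j _ => ?_
      rw [Matrix.mul_diagonal, Matrix.diagonal_mul, Matrix.star_apply]
      calc (p i : ℂ) * M i j * (μ j : ℂ) * star (M i j)
          = (p i : ℂ) * (μ j : ℂ) * (M i j * star (M i j)) := by ring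
        _ = ((p i * μ j * Complex.normSq (M i j) : ℝ) : ℂ) := by
            rw [Complex.star_def, Complex.mul_conj]
            push_cast
            ring
    rw [e3, e4, Complex.re_sum]
    refine Finset.sum_congr rfl fun i _ => ?_
    rw [Complex.re_sum]
    refine Finset.sum_congr rfl fun j _ => ?_
    rw [Complex.ofReal_re, hw_def]
    ring
  -- conclusion
  have hKlein := klein p q μ w hpnn (fun j => mul_nonneg (hαnn j.1) (hβnn j.2))
    (fun i j => Complex.normSq_nonneg _) hrow hcol hp1 hq1 hμlog hker
  have hvNρ : vN ρ = -∑ i, p i * Real.log (p i) := by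
    rw [vN, trace_mul_matLog_re hH]
  have hsplit : Matrix.trace (ρ * Lmat)
      = Matrix.trace (ptraceB ρ * matLog (ptraceB ρ))
        + Matrix.trace (ptraceA' ρ * matLog (ptraceA' ρ)) := by
    rw [hL_def, Matrix.mul_add, Matrix.trace_add, trace_mul_kron_left, trace_mul_kron_right]
  have hvNAB : vN (ptraceB ρ) + vN (ptraceA' ρ) = -(Matrix.trace (ρ * Lmat)).re := by
    rw [hsplit, Complex.add_re, vN, vN]
    ring
  rw [hvNρ, hvNAB, htr]
  linarith [hKlein]
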